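/- Let k ∈ ℕ, let S be a binary string of length ℓ ≥ 1, and let C be any binary string with |C| = |γ(S)| = (4k+12)ℓ + 2k+4. Then Ham(C, γ(S)) ≥ Ham(ψ(C), S). -/

import Mathlib

/-- Hamming distance between two (equal-length) strings:
the number of positions where they differ. -/
def ham : List Bool → List Bool → ℕ
  | x :: U, y :: V => (if x = y then 0 else 1) + ham U V
  | _, _ => 0

/-- The morphism `φ`: `φ(0) = 0^{2k+4} 1010 0^{2k+4}` and `φ(1) = 0^{2k+4} 1011 0^{2k+4}`,
with `0 ↦ false`, `1 ↦ true`. -/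
def phi (k : ℕ) (S : List Bool) : List Bool :=
  S.flatMap fun x =>
    List.replicate (2 * k + 4) false ++ [true, false, true, x] ++
      List.replicate (2 * k + 4) false

/-- `γ(S) = 1^{2k+4} · φ(S)`. -/
def gamma (k : ℕ) (S : List Bool) : List Bool :=
  List.replicate (2 * k + 4) true ++ phi k S

/-- `ψ(U)`: the binary string of length `ℓ` whose `j`-th letter is `U[(j+1)(4k+12) - 1]`. -/
def psi (k ℓ : ℕ) (U : List Bool) : List Bool :=
  (List.range ℓ).map fun j => U.getD ((j + 1) * (4 * k + 12) - 1) false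

/-!
In `γ(S)` the `j`-th letter of `S` sits exactly at position `(j+1)(4k+12) - 1`, the position that
`ψ` reads, so `ψ(γ(S)) = S`. Since `ψ` reads pairwise distinct positions, it can only lose
mismatches: `Ham(ψ(C), ψ(γ(S))) ≤ Ham(C, γ(S))`.
-/

open Finset

lemma ham_eq_sum_range (U V : List Bool) :
    ham U V = ∑ i ∈ range (min U.length V.length),
      if U.getD i false = V.getD i false then 0 else 1 := by
  induction U generalizing V with
  | nil => simp [ham]
  | cons u U ih =>
    cases V with
    | nil => simp [ham]
    | cons v V =>
      simp only [ham, ih V, List.length_cons, Nat.add_min_add_right, sum_range_succ',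
        List.getD_cons_succ, List.getD_cons_zero]
      ring

lemma ham_map_range (f g : ℕ → Bool) (ℓ : ℕ) :
    ham ((List.range ℓ).map f) ((List.range ℓ).map g) =
      ∑ j ∈ range ℓ, if f j = g j then 0 else 1 := by
  rw [ham_eq_sum_range]
  simp only [List.length_map, List.length_range, min_self]
  refine sum_congr rfl fun j hj => ?_
  simp [List.getD_eq_getElem?_getD, List.getElem?_range (mem_range.1 hj)]

lemma ham_map_getD_le {U V : List Bool} {ℓ : ℕ} {p : ℕ → ℕ} (hp : Set.InjOn p (range ℓ))
    (hU : ∀ j < ℓ, p j < U.length) (hV : ∀ j < ℓ, p j < V.length) :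
    ham ((List.range ℓ).map fun j => U.getD (p j) false)
      ((List.range ℓ).map fun j => V.getD (p j) false) ≤ ham U V := by
  rw [ham_map_range, ham_eq_sum_range,
    ← sum_image (f := fun i => if U.getD i false = V.getD i false then 0 else 1) hp]
  refine sum_le_sum_of_subset fun i hi => ?_
  obtain ⟨j, hj, rfl⟩ := mem_image.1 hi
  have hj := mem_range.1 hj
  exact mem_range.2 (lt_min (hU j hj) (hV j hj))

lemma phi_cons (k : ℕ) (x : Bool) (S : List Bool) :
    phi k (x :: S) = (List.replicate (2 * k + 4) false ++ [true, false, true, x] ++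
      List.replicate (2 * k + 4) false) ++ phi k S := by
  simp [phi]

lemma length_phi (k : ℕ) (S : List Bool) : (phi k S).length = (4 * k + 12) * S.length := by
  induction S with
  | nil => simp [phi]
  | cons x S ih =>
    rw [phi_cons, List.length_append, ih]
    simp only [List.length_append, List.length_replicate, List.length_cons, List.length_nil]
    ring

lemma length_gamma (k : ℕ) (S : List Bool) :
    (gamma k S).length = (4 * k + 12) * S.length + (2 * k + 4) := by
  simp [gamma, length_phi, add_comm]

lemma getD_phi (k : ℕ) (S : List Bool) (j : ℕ) :
    (phi k S).getD (j * (4 * k + 12) + (2 * k + 7)) false = S.getD j false := by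
  induction S generalizing j with
  | nil => simp [phi]
  | cons x S ih =>
    rw [phi_cons]
    cases j with
    | zero =>
      rw [List.getD_append _ _ _ _ (by simp; omega), List.append_assoc,
        List.getD_append_right _ _ _ _ (by simp)]
      simp
    | succ j =>
      rw [List.getD_append_right _ _ _ _ (by simp; nlinarith)]
      have hidx : (j + 1) * (4 * k + 12) + (2 * k + 7) -
          (List.replicate (2 * k + 4) false ++ [true, false, true, x] ++
            List.replicate (2 * k + 4) false).length = j * (4 * k + 12) + (2 * k + 7) := by
        simp only [List.length_append, List.length_replicate, List.length_cons, List.length_nil]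
        ring_nf
        omega
      rw [hidx, ih, List.getD_cons_succ]

lemma psi_index_eq (k j : ℕ) :
    (j + 1) * (4 * k + 12) - 1 = j * (4 * k + 12) + (4 * k + 11) := by
  rw [add_one_mul]
  omega

lemma getD_gamma (k : ℕ) (S : List Bool) (j : ℕ) :
    (gamma k S).getD ((j + 1) * (4 * k + 12) - 1) false = S.getD j false := by
  rw [gamma, psi_index_eq, List.getD_append_right _ _ _ _ (by simp; omega),
    List.length_replicate, ← getD_phi k S j]
  congr 1
  omega

lemma psi_gamma (k : ℕ) (S : List Bool) : psi k S.length (gamma k S) = S := by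
  refine List.ext_getElem (by simp [psi]) fun j _ hj => ?_
  simp only [psi, List.getElem_map, List.getElem_range, getD_gamma, List.getD_eq_getElem _ _ hj]

theorem stmt6_general (k ℓ : ℕ) (S : List Bool) (hS : S.length = ℓ)
    (C : List Bool) (hC : C.length = (4 * k + 12) * ℓ + 2 * k + 4) :
    ham (psi k ℓ C) S ≤ ham C (gamma k S) := by
  subst hS
  have hpos : ∀ j < S.length, (j + 1) * (4 * k + 12) - 1 < (4 * k + 12) * S.length + 2 * k + 4 :=
    fun j hj => by rw [psi_index_eq]; nlinarith
  have hinj : Set.InjOn (fun j => (j + 1) * (4 * k + 12) - 1) (range S.length) := by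
    intro i _ j _ hij
    simp only [psi_index_eq] at hij
    exact Nat.eq_of_mul_eq_mul_right (by omega : 0 < 4 * k + 12) (by omega)
  calc ham (psi k S.length C) S = ham (psi k S.length C) (psi k S.length (gamma k S)) := by
        rw [psi_gamma]
    _ ≤ ham C (gamma k S) :=
        ham_map_getD_le hinj (fun j hj => hC ▸ hpos j hj)
          (fun j hj => by rw [length_gamma]; have := hpos j hj; omega)

theorem stmt6 (k ℓ : ℕ) (hℓ : 1 ≤ ℓ) (S : List Bool) (hS : S.length = ℓ)
    (C : List Bool) (hC : C.length = (4 * k + 12) * ℓ + 2 * k + 4) :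
    ham (psi k ℓ C) S ≤ ham C (gamma k S) :=
  stmt6_general k ℓ S hS C hC
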